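/- The value γ₀ = σ²δ²/(2η²) satisfies f₁(γ₀) = 0, and γ₀ is the unique positive solution of f₁(γ) = 0; moreover f₁(γ) < 0 for 0 < γ < γ₀ and f₁(γ) > 0 for γ > γ₀. -/

import Mathlib

open Real Filter Set

/-- f₁(γ) = ηγ/(δ(δ+γ)) − σ²/(η + √(η² + 2σ²(δ+γ))). -/
noncomputable def f1 (σ η δ : ℝ) (γ : ℝ) : ℝ :=
  η * γ / (δ * (δ + γ)) - σ ^ 2 / (η + Real.sqrt (η ^ 2 + 2 * σ ^ 2 * (δ + γ)))

/-! The first term of `f1` increases strictly and the second decreases on `γ > -δ`, so `f1` has at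
most one root there; at `γ₀ = σ²δ²/(2η²)` the square root is the perfect square `η + σ²δ/η`,
which makes `γ₀` a root. -/

lemma strictMonoOn_mul_div_mul_add {η δ : ℝ} (hη : 0 < η) (hδ : 0 < δ) :
    StrictMonoOn (fun γ : ℝ => η * γ / (δ * (δ + γ))) (Ioi (-δ)) := by
  intro a ha b hb hab
  have ha' : 0 < δ + a := by simp only [mem_Ioi] at ha; linarith
  have hb' : 0 < δ + b := by simp only [mem_Ioi] at hb; linarith
  rw [div_lt_div_iff₀ (by positivity) (by positivity)]
  nlinarith [mul_pos (mul_pos hη hδ) (mul_pos hδ (sub_pos.2 hab))]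

lemma antitone_div_add_sqrt {σ η δ : ℝ} (hη : 0 < η) :
    Antitone (fun γ : ℝ => σ ^ 2 / (η + Real.sqrt (η ^ 2 + 2 * σ ^ 2 * (δ + γ)))) := by
  intro a b hab
  have hsqrt : Real.sqrt (η ^ 2 + 2 * σ ^ 2 * (δ + a)) ≤
      Real.sqrt (η ^ 2 + 2 * σ ^ 2 * (δ + b)) :=
    Real.sqrt_le_sqrt (by nlinarith [sq_nonneg σ])
  exact div_le_div_of_nonneg_left (sq_nonneg σ) (by positivity) (by linarith)

lemma f1_strictMonoOn {σ η δ : ℝ} (hη : 0 < η) (hδ : 0 < δ) :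
    StrictMonoOn (f1 σ η δ) (Ioi (-δ)) := fun _ ha _ hb hab =>
  (sub_lt_sub_right (strictMonoOn_mul_div_mul_add hη hδ ha hb hab) _).trans_le
    (sub_le_sub_left (antitone_div_add_sqrt (σ := σ) (δ := δ) hη hab.le) _)

lemma sqrt_at_f1_root {σ η δ : ℝ} (hη : 0 < η) (hδ : 0 < δ) :
    Real.sqrt (η ^ 2 + 2 * σ ^ 2 * (δ + σ ^ 2 * δ ^ 2 / (2 * η ^ 2))) = η + σ ^ 2 * δ / η := by
  rw [show η ^ 2 + 2 * σ ^ 2 * (δ + σ ^ 2 * δ ^ 2 / (2 * η ^ 2)) = (η + σ ^ 2 * δ / η) ^ 2 by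
    field_simp; ring]
  exact Real.sqrt_sq (by positivity)

lemma f1_root {σ η δ : ℝ} (hη : 0 < η) (hδ : 0 < δ) :
    f1 σ η δ (σ ^ 2 * δ ^ 2 / (2 * η ^ 2)) = 0 := by
  rw [f1, sqrt_at_f1_root hη hδ, sub_eq_zero]
  field_simp
  ring

theorem f1_root_unique_general (σ η δ : ℝ) (hη : 0 < η) (hδ : 0 < δ) :
    f1 σ η δ (σ ^ 2 * δ ^ 2 / (2 * η ^ 2)) = 0 ∧
    (∀ γ : ℝ, 0 < γ → f1 σ η δ γ = 0 → γ = σ ^ 2 * δ ^ 2 / (2 * η ^ 2)) ∧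
    (∀ γ : ℝ, 0 < γ → γ < σ ^ 2 * δ ^ 2 / (2 * η ^ 2) → f1 σ η δ γ < 0) ∧
    (∀ γ : ℝ, σ ^ 2 * δ ^ 2 / (2 * η ^ 2) < γ → 0 < f1 σ η δ γ) := by
  set γ₀ := σ ^ 2 * δ ^ 2 / (2 * η ^ 2)
  have hroot : f1 σ η δ γ₀ = 0 := f1_root hη hδ
  have hmono := f1_strictMonoOn (σ := σ) hη hδ
  have hγ₀_nonneg : 0 ≤ γ₀ := by positivity
  have mem_of_nonneg {γ : ℝ} (hγ : 0 ≤ γ) : γ ∈ Ioi (-δ) := show -δ < γ by linarith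
  have hγ₀ : γ₀ ∈ Ioi (-δ) := mem_of_nonneg hγ₀_nonneg
  refine ⟨hroot, fun γ hγ hf => ?_, fun γ hγ hlt => ?_, fun γ hlt => ?_⟩
  · exact hmono.injOn (mem_of_nonneg hγ.le) hγ₀ (hf.trans hroot.symm)
  · exact hroot ▸ hmono (mem_of_nonneg hγ.le) hγ₀ hlt
  · exact hroot ▸ hmono hγ₀ (mem_of_nonneg (hγ₀_nonneg.trans hlt.le)) hlt

theorem f1_root_unique (σ η δ : ℝ) (hσ : 0 < σ) (hη : 0 < η) (hδ : 0 < δ) :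
    f1 σ η δ (σ ^ 2 * δ ^ 2 / (2 * η ^ 2)) = 0 ∧
    (∀ γ : ℝ, 0 < γ → f1 σ η δ γ = 0 → γ = σ ^ 2 * δ ^ 2 / (2 * η ^ 2)) ∧
    (∀ γ : ℝ, 0 < γ → γ < σ ^ 2 * δ ^ 2 / (2 * η ^ 2) → f1 σ η δ γ < 0) ∧
    (∀ γ : ℝ, σ ^ 2 * δ ^ 2 / (2 * η ^ 2) < γ → 0 < f1 σ η δ γ) :=
  f1_root_unique_general σ η δ hη hδ
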